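/- arXiv:1606.06165 — 7 statements merged into one kernel-verified Lean document; each statement's English description precedes it below -/
import Mathlib

section
/- For nonzero vectors x, y in a complex Hilbert space H and λ ∈ (0,1), the λ-Aluthge transform of the rank-one operator x ⊗ y satisfies Δ_λ(x ⊗ y) = (⟨x,y⟩ / ‖y‖²) (y ⊗ y). -/
open ContinuousLinearMap
open scoped InnerProductSpace

variable {H K : Type*} [NormedAddCommGroup H] [InnerProductSpace ℂ H] [CompleteSpace H]
  [NormedAddCommGroup K] [InnerProductSpace ℂ K] [CompleteSpace K]

/-- `|T| = √(T*T)`, via the continuous functional calculus. -/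
noncomputable def absOp {E : Type*} [NormedAddCommGroup E] [InnerProductSpace ℂ E]
    [CompleteSpace E] (T : E →L[ℂ] E) : E →L[ℂ] E := CFC.sqrt (adjoint T * T)

/-- real power of a (positive) operator via continuous functional calculus. -/
noncomputable def opPow {E : Type*} [NormedAddCommGroup E] [InnerProductSpace ℂ E]
    [CompleteSpace E] (A : E →L[ℂ] E) (r : ℝ) : E →L[ℂ] E := CFC.rpow A r

/-- `V` is the partial isometry of the polar decomposition `T = V|T|`, `N(V) = N(T)`. -/
def IsPolarDecomp {E : Type*} [NormedAddCommGroup E] [InnerProductSpace ℂ E]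
    [CompleteSpace E] (T V : E →L[ℂ] E) : Prop :=
  V * adjoint V * V = V ∧ T = V * absOp T ∧ LinearMap.ker (V : E →ₗ[ℂ] E) = LinearMap.ker (T : E →ₗ[ℂ] E)

/-- The λ-Aluthge transform `Δ_λ(T) = |T|^λ V |T|^{1-λ}` computed from the
partial isometry `V` of the polar decomposition of `T`. -/
noncomputable def aluthge {E : Type*} [NormedAddCommGroup E] [InnerProductSpace ℂ E]
    [CompleteSpace E] (l : ℝ) (T V : E →L[ℂ] E) : E →L[ℂ] E :=
  opPow (absOp T) l * V * opPow (absOp T) (1 - l)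

/-- the rank one operator `x ⊗ y : u ↦ ⟨u,y⟩x` (inner product linear in the first slot). -/
noncomputable def rankOne {E : Type*} [NormedAddCommGroup E] [InnerProductSpace ℂ E]
    (x y : E) : E →L[ℂ] E := (innerSL ℂ y).smulRight x

/-- a unitary operator between two Hilbert spaces. -/
def IsUnitaryOp (U : H →L[ℂ] K) : Prop :=
  adjoint U ∘L U = ContinuousLinearMap.id ℂ H ∧ U ∘L adjoint U = ContinuousLinearMap.id ℂ K

/-- orthogonal projection: self-adjoint idempotent. -/
def IsOrthoProj {E : Type*} [NormedAddCommGroup E] [InnerProductSpace ℂ E]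
    [CompleteSpace E] (P : E →L[ℂ] E) : Prop := IsSelfAdjoint P ∧ P * P = P

/-- quasi-normal: `T` commutes with `T*T`. -/
def IsQuasinormal {E : Type*} [NormedAddCommGroup E] [InnerProductSpace ℂ E]
    [CompleteSpace E] (T : E →L[ℂ] E) : Prop :=
  T * (adjoint T * T) = (adjoint T * T) * T

/-!
Write `T = x ⊗ y` and let `P` be the orthogonal projection onto `ℂ ∙ y`. Since
`T* T = ‖x‖² (y ⊗ y) = (‖x‖ ‖y‖)² P`, we get `|T| = ‖x‖ ‖y‖ P` and `|T|^r = (‖x‖ ‖y‖)^r P`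
for `r > 0`. Hence `Δ_λ(T) = ‖x‖ ‖y‖ P V P = P V |T| = P T`, and `P T = (P x) ⊗ y`.
-/

section StarProjection

variable {A : Type*} [CStarAlgebra A] [PartialOrder A] [StarOrderedRing A] {p : A}

theorem IsStarProjection.sqrt_mul_self_smul (hp : IsStarProjection p) {c : ℝ} (hc : 0 ≤ c) :
    CFC.sqrt ((c * c) • p) = c • p :=
  CFC.sqrt_unique (by rw [smul_mul_smul_comm, hp.isIdempotentElem.eq]) (smul_nonneg hc hp.nonneg)

theorem IsStarProjection.smul_rpow (hp : IsStarProjection p) {c r : ℝ} (hc : 0 ≤ c)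
    (hr : 0 < r) : (c • p) ^ r = c ^ r • p := by
  obtain ⟨hspec, hsa⟩ := isStarProjection_iff_spectrum_subset_and_isSelfAdjoint.mp hp
  rw [CFC.rpow_eq_cfc_real (smul_nonneg hc hp.nonneg), ← cfc_const_mul_id c p,
    ← cfc_comp' (fun t => t ^ r) (fun t => c * t) p
      (Real.continuous_rpow_const hr.le).continuousOn, ← cfc_const_mul_id (c ^ r) p]
  refine cfc_congr fun t ht => ?_
  rcases hspec ht with rfl | rfl
  · simp [Real.zero_rpow hr.ne']
  · simp

end StarProjection

section Aluthge

variable {E : Type*} [NormedAddCommGroup E] [InnerProductSpace ℂ E] [CompleteSpace E]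
  {T V P : E →L[ℂ] E} {c : ℝ}

theorem absOp_eq_smul_of_adjoint_mul_self_eq (hP : IsStarProjection P) (hc : 0 ≤ c)
    (h : adjoint T * T = (c * c) • P) : absOp T = c • P := by
  rw [absOp, h, hP.sqrt_mul_self_smul hc]

theorem aluthge_eq_mul_of_absOp_eq_smul (hP : IsStarProjection P) (hc : 0 ≤ c) {l : ℝ}
    (hl : l ∈ Set.Ioo (0 : ℝ) 1) (hTV : T = V * absOp T) (habs : absOp T = c • P) :
    aluthge l T V = P * T := by
  have hpow : c ^ l * c ^ (1 - l) = c := by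
    rw [← Real.rpow_add' hc (by norm_num), add_sub_cancel, Real.rpow_one]
  calc aluthge l T V = (c ^ l • P) * V * (c ^ (1 - l) • P) := by
        rw [aluthge, opPow, opPow, habs, CFC.rpow_eq_pow, CFC.rpow_eq_pow,
          hP.smul_rpow hc hl.1, hP.smul_rpow hc (sub_pos.mpr hl.2)]
    _ = (c ^ l * c ^ (1 - l)) • (P * (V * P)) := by
        rw [smul_mul_assoc, smul_mul_assoc, mul_smul_comm, mul_assoc, smul_smul]
    _ = P * (V * (c • P)) := by rw [hpow, mul_smul_comm, mul_smul_comm]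
    _ = P * T := by rw [← habs, ← hTV]

end Aluthge

section RankOne

theorem rankOne_eq_innerProductSpace_rankOne {E : Type*} [NormedAddCommGroup E]
    [InnerProductSpace ℂ E] (x y : E) : rankOne x y = InnerProductSpace.rankOne ℂ x y := rfl

variable {E : Type*} [NormedAddCommGroup E] [InnerProductSpace ℂ E]

theorem InnerProductSpace.rankOne_self_eq_smul_starProjection (y : E) :
    rankOne ℂ y y = (‖y‖ ^ 2 : ℝ) • (ℂ ∙ y).starProjection := by
  ext u
  rw [smul_apply, ← Complex.coe_smul]
  exact (Submodule.smul_starProjection_singleton ℂ u).symm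

theorem InnerProductSpace.adjoint_rankOne_mul_self [CompleteSpace E] (x y : E) :
    adjoint (rankOne ℂ x y) * rankOne ℂ x y =
      (‖x‖ * ‖y‖ * (‖x‖ * ‖y‖)) • (ℂ ∙ y).starProjection := by
  rw [adjoint_rankOne, mul_def, rankOne_comp_rankOne, rankOne_self_eq_smul_starProjection,
    ← Complex.coe_smul, smul_smul, ← Complex.coe_smul, inner_self_eq_norm_sq_to_K]
  congr 1
  simp only [Complex.coe_algebraMap, Complex.ofReal_pow, Complex.ofReal_mul]
  ring

end RankOne

theorem stmt4_general (x y : H) (l : ℝ) (hl : l ∈ Set.Ioo (0 : ℝ) 1)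
    (V : H →L[ℂ] H) (hV : IsPolarDecomp (rankOne x y) V) :
    aluthge l (rankOne x y) V = ((⟪y, x⟫_ℂ) / ((‖y‖ : ℂ) ^ 2)) • rankOne y y := by
  have hP : IsStarProjection (ℂ ∙ y).starProjection := isStarProjection_starProjection
  have hc : 0 ≤ ‖x‖ * ‖y‖ := by positivity
  have habs : absOp (rankOne x y) = (‖x‖ * ‖y‖) • (ℂ ∙ y).starProjection :=
    absOp_eq_smul_of_adjoint_mul_self_eq hP hc (InnerProductSpace.adjoint_rankOne_mul_self x y)
  rw [aluthge_eq_mul_of_absOp_eq_smul hP hc hl hV.2.1 habs]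
  simp only [rankOne_eq_innerProductSpace_rankOne]
  rw [mul_def, InnerProductSpace.comp_rankOne, Submodule.starProjection_singleton, map_smul, smul_apply]
  push_cast
  rfl

/-- `Δ_λ(x ⊗ y) = (⟨x,y⟩/‖y‖²)(y ⊗ y)` for nonzero `x, y` and `λ ∈ (0,1)`. -/
theorem stmt4 (x y : H) (hx : x ≠ 0) (hy : y ≠ 0) (l : ℝ) (hl : l ∈ Set.Ioo (0 : ℝ) 1)
    (V : H →L[ℂ] H) (hV : IsPolarDecomp (rankOne x y) V) :
    aluthge l (rankOne x y) V = ((⟪y, x⟫_ℂ) / ((‖y‖ : ℂ) ^ 2)) • rankOne y y :=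
  stmt4_general x y l hl V hV
end

section
/- Suppose A ∈ B(H) has the property that for every vector z ∈ H, either ⟨Az, z⟩ = 0 or Az and z are linearly dependent. Then A is a scalar multiple of the identity. -/
open ContinuousLinearMap
open scoped InnerProductSpace

variable {H K : Type*} [NormedAddCommGroup H] [InnerProductSpace ℂ H] [CompleteSpace H]
  [NormedAddCommGroup K] [InnerProductSpace ℂ K] [CompleteSpace K]

/-! If `⟪A w, w⟫ ≠ 0` then `w` is an eigenvector, say `A w = α • w`, and so is every vector of the
nonempty open set where the quadratic form does not vanish. Given `z` independent of `w`, this set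
contains `w + s • z` and `w + t • z` for two distinct small `s, t ≠ 0`, and three eigenvectors
`w`, `w + s • z`, `w + t • z` in the plane spanned by `w` and `z` force `A z = α • z`. If instead
the quadratic form vanishes identically, `A = 0` by polarization. -/

open Filter Topology

theorem exists_eq_smul_of_not_linearIndependent_pair {K V : Type*} [DivisionRing K]
    [AddCommGroup V] [Module K V] {x y : V} (hy : y ≠ 0) (h : ¬LinearIndependent K ![x, y]) :
    ∃ c : K, x = c • y := by
  rw [LinearIndependent.pair_symm_iff, LinearIndependent.pair_iff' hy] at h
  obtain ⟨c, hc⟩ := not_forall_not.1 h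
  exact ⟨c, hc.symm⟩

theorem LinearMap.apply_eq_smul_of_apply_add_smul_eq_smul {K V : Type*} [Field K]
    [AddCommGroup V] [Module K V] (f : V →ₗ[K] V) {w z : V}
    (hwz : LinearIndependent K ![w, z]) {α s t c d : K} (hw : f w = α • w)
    (hs : s ≠ 0) (ht : t ≠ 0) (hst : s ≠ t)
    (hc : f (w + s • z) = c • (w + s • z)) (hd : f (w + t • z) = d • (w + t • z)) :
    f z = α • z := by
  rw [map_add, map_smul, hw] at hc hd
  have hsz : s • f z = (c - α) • w + (c * s) • z := by linear_combination (norm := module) hc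
  have htz : t • f z = (d - α) • w + (d * t) • z := by linear_combination (norm := module) hd
  obtain ⟨hw_coeff, hz_coeff⟩ := LinearIndependent.pair_iff.1 hwz
    (t * (c - α) - s * (d - α)) (s * t * (c - d))
    (by linear_combination (norm := module) s • htz - t • hsz)
  have hcd : c = d := by simpa [hs, ht, sub_eq_zero] using hz_coeff
  have hcα : c = α := by
    have : (t - s) * (c - α) = 0 := by linear_combination hw_coeff - s * hcd
    simpa [sub_eq_zero, hst.symm] using this
  refine smul_right_injective V hs ?_
  simp only [hsz, hcα]
  module

theorem eventually_inner_apply_add_smul_ne_zero {E : Type*} [NormedAddCommGroup E]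
    [InnerProductSpace ℂ E] (A : E →L[ℂ] E) {w : E} (hw : ⟪A w, w⟫_ℂ ≠ 0) (z : E) :
    ∀ᶠ t : ℂ in 𝓝 0, ⟪A (w + t • z), w + t • z⟫_ℂ ≠ 0 := by
  have hcont : Continuous fun t : ℂ => ⟪A (w + t • z), w + t • z⟫_ℂ := by fun_prop
  exact hcont.continuousAt.eventually_ne (by simpa using hw)

/-- if for every `z` either `⟨Az,z⟩ = 0` or `Az, z` are linearly dependent,
then `A` is a scalar multiple of the identity. -/
theorem stmt8 (A : H →L[ℂ] H)
    (h : ∀ z : H, ⟪A z, z⟫_ℂ = 0 ∨ ¬ LinearIndependent ℂ ![A z, z]) :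
    ∃ α : ℂ, A = α • (1 : H →L[ℂ] H) := by
  have eigen (v : H) (hv : ⟪A v, v⟫_ℂ ≠ 0) : ∃ c : ℂ, A v = c • v :=
    exists_eq_smul_of_not_linearIndependent_pair (by rintro rfl; simp at hv) ((h v).resolve_left hv)
  by_cases hA : ∀ z : H, ⟪A z, z⟫_ℂ = 0
  · have hA0 : (A : H →ₗ[ℂ] H) = 0 := (inner_map_self_eq_zero _).1 hA
    exact ⟨0, by ext z; simpa using LinearMap.congr_fun hA0 z⟩
  obtain ⟨w, hw⟩ := not_forall.1 hA
  obtain ⟨α, hα⟩ := eigen w hw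
  refine ⟨α, ContinuousLinearMap.ext fun z => ?_⟩
  by_cases hwz : LinearIndependent ℂ ![w, z]
  · obtain ⟨s, ⟨hqs, hs⟩, t, ⟨hqt, ht⟩, hst⟩ :=
      ((infinite_of_mem_nhds 0 (eventually_inner_apply_add_smul_ne_zero A hw z)).sdiff
        (Set.finite_singleton 0)).nontrivial
    obtain ⟨c, hc⟩ := eigen _ hqs
    obtain ⟨d, hd⟩ := eigen _ hqt
    simpa using A.toLinearMap.apply_eq_smul_of_apply_add_smul_eq_smul hwz hα hs ht hst hc hd
  · obtain ⟨a, rfl⟩ := exists_eq_smul_of_not_linearIndependent_pair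
      (by rintro rfl; simp at hw) (LinearIndependent.pair_symm_iff.not.1 hwz)
    simp [hα, smul_smul, mul_comm]
end

section
/- Let T ∈ B(H) be invertible and λ ∈ [0,1]. Then T is positive if and only if Δ_λ(T) is positive. -/
/-! For invertible `T` the polar factor `V` is unitary, and `T ≥ 0` exactly when `V = 1`; in that
case `Δ_λ(T) = |T|^λ |T|^{1-λ} = |T| = T`. Conversely, conjugating `Δ_λ(T) ≥ 0` by `|T|^{λ-1}` gives
`|T|^{2λ-1} V ≥ 0`. A positive invertible `c` with `c u ≥ 0` for a unitary `u` satisfies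
`(c u)² = (c u)(c u)* = c²`, so `c u = c` by uniqueness of positive square roots, and `u = 1`. -/

open ContinuousLinearMap
open scoped InnerProductSpace

variable {H K : Type*} [NormedAddCommGroup H] [InnerProductSpace ℂ H] [CompleteSpace H]
  [NormedAddCommGroup K] [InnerProductSpace ℂ K] [CompleteSpace K]

open CFC

section CStarAlgebra

variable {A : Type*} [CStarAlgebra A] [PartialOrder A] [StarOrderedRing A]

lemma isUnit_cfcAbs {a : A} (ha : IsUnit a) : IsUnit (CFC.abs a) :=
  (isUnit_sqrt_iff _ (star_mul_self_nonneg a)).mpr (ha.star.mul ha)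

lemma rpow_two_mul_sub_one_mul_nonneg {a v : A} (ha : 0 ≤ a) (ha' : IsUnit a) {l : ℝ}
    (h : 0 ≤ a ^ l * v * a ^ (1 - l)) : 0 ≤ a ^ (2 * l - 1) * v := by
  have hconj : a ^ (l - 1) * (a ^ l * v * a ^ (1 - l)) * a ^ (l - 1) = a ^ (2 * l - 1) * v := by
    calc a ^ (l - 1) * (a ^ l * v * a ^ (1 - l)) * a ^ (l - 1)
        = a ^ (l - 1 + l) * v * a ^ (1 - l + (l - 1)) := by
          rw [rpow_add ha', rpow_add ha']; noncomm_ring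
      _ = a ^ (2 * l - 1) * v := by
          rw [show 1 - l + (l - 1) = 0 by ring, rpow_zero a ha, mul_one,
            show l - 1 + l = 2 * l - 1 by ring]
  rw [← hconj]
  simpa only [(IsSelfAdjoint.of_nonneg (rpow_nonneg (a := a) (y := l - 1))).star_eq]
    using star_left_conjugate_nonneg h (a ^ (l - 1))

lemma eq_one_of_nonneg_mul_mem_unitary {c u : A} (hc : 0 ≤ c) (hc' : IsUnit c)
    (hu : u ∈ unitary A) (h : 0 ≤ c * u) : u = 1 := by
  have hsq : (c * u) * (c * u) = c * c := by
    calc (c * u) * (c * u) = (c * u) * star (c * u) := by rw [(IsSelfAdjoint.of_nonneg h).star_eq]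
      _ = c * (u * star u) * c := by rw [star_mul, (IsSelfAdjoint.of_nonneg hc).star_eq]; noncomm_ring
      _ = c * c := by rw [Unitary.mul_star_self_of_mem hu, mul_one]
  have hcu : c * u = c := by
    rw [← sqrt_mul_self (c * u) h, hsq, sqrt_mul_self c hc]
  exact hc'.mul_left_cancel (hcu.trans (mul_one c).symm)

end CStarAlgebra

namespace IsPolarDecomp

variable {E : Type*} [NormedAddCommGroup E] [InnerProductSpace ℂ E] [CompleteSpace E]
  {T V : E →L[ℂ] E}

lemma mem_unitary (hV : IsPolarDecomp T V) (hT : IsUnit T) : V ∈ unitary (E →L[ℂ] E) := by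
  have hA : IsUnit (CFC.abs T) := isUnit_cfcAbs hT
  have hVA : V * CFC.abs T = T := hV.2.1.symm
  have hVu : IsUnit V := hA.mul_right_iff.mp (by rwa [hVA])
  refine hVu.mem_unitary_of_star_mul_self (hA.mul_right_cancel (hA.mul_left_cancel ?_))
  calc CFC.abs T * (star V * V * CFC.abs T) = star (V * CFC.abs T) * (V * CFC.abs T) := by
        rw [star_mul, (IsSelfAdjoint.of_nonneg (abs_nonneg T)).star_eq]; noncomm_ring
    _ = CFC.abs T * (1 * CFC.abs T) := by rw [hVA, ← abs_mul_abs, one_mul]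

lemma eq_one_iff_nonneg (hV : IsPolarDecomp T V) (hT : IsUnit T) : V = 1 ↔ 0 ≤ T := by
  have hVA : V * CFC.abs T = T := hV.2.1.symm
  constructor
  · rintro rfl
    rw [← hVA, one_mul]
    exact abs_nonneg T
  · intro hT0
    rw [abs_of_nonneg T hT0] at hVA
    exact hT.mul_eq_right.mp hVA

end IsPolarDecomp

theorem stmt9_general (T : H →L[ℂ] H) (hT : IsUnit T) (l : ℝ)
    (V : H →L[ℂ] H) (hV : IsPolarDecomp T V) :
    T.IsPositive ↔ (aluthge l T V).IsPositive := by
  have hA : IsUnit (CFC.abs T) := isUnit_cfcAbs hT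
  have haluthge : aluthge l T V = CFC.abs T ^ l * V * CFC.abs T ^ (1 - l) := rfl
  rw [← nonneg_iff_isPositive, ← nonneg_iff_isPositive, ← hV.eq_one_iff_nonneg hT, haluthge]
  constructor
  · rintro rfl
    rw [mul_one, ← rpow_add hA, add_sub_cancel, rpow_one _ (abs_nonneg T)]
    exact abs_nonneg T
  · exact fun hΔ ↦ eq_one_of_nonneg_mul_mem_unitary rpow_nonneg (hA.cfcRpow _)
      (hV.mem_unitary hT) (rpow_two_mul_sub_one_mul_nonneg (abs_nonneg T) hA hΔ)

/-- for invertible `T` and `λ ∈ [0,1]`, `T` is positive iff `Δ_λ(T)` is. -/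
theorem stmt9 (T : H →L[ℂ] H) (hT : IsUnit T) (l : ℝ) (hl : l ∈ Set.Icc (0 : ℝ) 1)
    (V : H →L[ℂ] H) (hV : IsPolarDecomp T V) :
    T.IsPositive ↔ (aluthge l T V).IsPositive :=
  stmt9_general T hT l V hV
end

section
/- If T ∈ B(H) is invertible, λ ∈ [0,1], and Δ_λ(T) = cI for some nonzero scalar c, then T = cI. -/
open ContinuousLinearMap
open scoped InnerProductSpace

variable {H K : Type*} [NormedAddCommGroup H] [InnerProductSpace ℂ H] [CompleteSpace H]
  [NormedAddCommGroup K] [InnerProductSpace ℂ K] [CompleteSpace K]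

section CStarAlgebra

variable {A : Type*} [CStarAlgebra A] [PartialOrder A] [StarOrderedRing A]

theorem isStrictlyPositive_sqrt_star_mul_self {a : A} (ha : IsUnit a) :
    IsStrictlyPositive (CFC.sqrt (star a * a)) := by
  have hpos : IsStrictlyPositive (star a * a) := ⟨star_mul_self_nonneg a, ha.star.mul ha⟩
  exact ⟨CFC.sqrt_nonneg _, CFC.isUnit_sqrt_iff_isStrictlyPositive.mpr hpos⟩

/-- Conjugating by the unit `a ^ l` turns `a ^ l * x * a ^ (1 - l)` into `x * a`,
and conjugation fixes scalars. -/
theorem mul_eq_smul_one_of_rpow_mul_mul_rpow_one_sub_eq {a x : A} {l : ℝ} {c : ℂ}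
    (ha : IsStrictlyPositive a) (h : a ^ l * x * a ^ (1 - l) = c • 1) : x * a = c • 1 := by
  have hsplit : a ^ (1 - l) * a ^ l = a := by
    rw [← CFC.rpow_add ha.isUnit, sub_add_cancel, CFC.rpow_one a]
  calc x * a = a ^ (-l) * a ^ l * x * (a ^ (1 - l) * a ^ l) := by
        rw [CFC.rpow_neg_mul_rpow l, one_mul, hsplit]
    _ = a ^ (-l) * (a ^ l * x * a ^ (1 - l)) * a ^ l := by simp only [mul_assoc]
    _ = c • (a ^ (-l) * a ^ l) := by rw [h, mul_smul_one, smul_mul_assoc]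
    _ = c • 1 := by rw [CFC.rpow_neg_mul_rpow l]

end CStarAlgebra

theorem stmt10_general (T : H →L[ℂ] H) (hT : IsUnit T) (l : ℝ)
    (V : H →L[ℂ] H) (hV : IsPolarDecomp T V) (c : ℂ)
    (h : aluthge l T V = c • (1 : H →L[ℂ] H)) :
    T = c • (1 : H →L[ℂ] H) := by
  have hA : IsStrictlyPositive (absOp T) := isStrictlyPositive_sqrt_star_mul_self hT
  rw [hV.2.1]
  exact mul_eq_smul_one_of_rpow_mul_mul_rpow_one_sub_eq hA h

/-- for invertible `T`, `λ ∈ [0,1]` and `c ≠ 0`, `Δ_λ(T) = cI → T = cI`. -/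
theorem stmt10 (T : H →L[ℂ] H) (hT : IsUnit T) (l : ℝ) (hl : l ∈ Set.Icc (0 : ℝ) 1)
    (V : H →L[ℂ] H) (hV : IsPolarDecomp T V) (c : ℂ) (hc : c ≠ 0)
    (h : aluthge l T V = c • (1 : H →L[ℂ] H)) :
    T = c • (1 : H →L[ℂ] H) :=
  stmt10_general T hT l V hV c h
end

section
/- A bounded operator T on a complex Hilbert space is quasi-normal (i.e., TT*T = T*T²) if and only if Δ_λ(T) = T, for any fixed λ ∈ (0,1). -/
open ContinuousLinearMap
open scoped InnerProductSpace

variable {H K : Type*} [NormedAddCommGroup H] [InnerProductSpace ℂ H] [CompleteSpace H]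
  [NormedAddCommGroup K] [InnerProductSpace ℂ K] [CompleteSpace K]

/-!
Write `T = V|T|`, `P = |T|^λ` and `Q = |T|^(1-λ)`, so that `Δ_λ(T) = PVQ` and `PQ = QP = |T|`.
If `PVQ = T` then `TP = PVQP = PV|T| = PT`. Conversely, if `T` commutes with `P`, then
`(PV - VP)|T| = PT - TP = 0`; since `b a = 0` forces `b a^s = 0` for positive `a` and `s > 0`
(the C*-identity gives `‖b c‖² = ‖b c² b*‖`, which lets one halve exponents), also
`(PV - VP)Q = 0`, i.e. `PVQ = VPQ = V|T| = T`. Finally, by functional calculus, `T` commutes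
with `P` iff it commutes with `|T|` iff it commutes with `|T|² = T*T`.
-/

open scoped NNReal
open CFC

lemma mul_eq_zero_of_mul_mul_self_eq_zero {A : Type*} [NonUnitalNormedRing A] [StarRing A]
    [CStarRing A] {b c : A} (hc : IsSelfAdjoint c) (h : b * (c * c) = 0) : b * c = 0 := by
  rw [← norm_eq_zero, ← mul_self_eq_zero, ← CStarRing.norm_self_mul_star, star_mul, hc.star_eq,
    ← mul_assoc, mul_assoc b, h, zero_mul, norm_zero]

section CStarAlgebra

variable {A : Type*} [CStarAlgebra A] [PartialOrder A] [StarOrderedRing A]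

lemma rpow_add_of_pos (a : A) {s t : ℝ} (hs : 0 < s) (ht : 0 < t) :
    a ^ (s + t) = a ^ s * a ^ t := by
  lift s to ℝ≥0 using hs.le
  lift t to ℝ≥0 using ht.le
  replace hs : 0 < s := mod_cast hs
  replace ht : 0 < t := mod_cast ht
  rw [← NNReal.coe_add, ← nnrpow_eq_rpow (by positivity), ← nnrpow_eq_rpow hs,
    ← nnrpow_eq_rpow ht, nnrpow_add hs ht]

lemma mul_rpow_eq_zero_of_mul_eq_zero {a b : A} (ha : 0 ≤ a) (h : b * a = 0) {s : ℝ}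
    (hs : 0 < s) : b * a ^ s = 0 := by
  -- halve the exponent down below `s`, then multiply back up with `a ^ (s - 2⁻¹ ^ n)`
  have h_half : ∀ n : ℕ, b * a ^ ((2 : ℝ)⁻¹ ^ n) = 0 := by
    intro n
    induction n with
    | zero => simpa [rpow_one a ha] using h
    | succ n ih =>
      refine mul_eq_zero_of_mul_mul_self_eq_zero (.of_nonneg rpow_nonneg) ?_
      rw [← rpow_add_of_pos a (by positivity) (by positivity), ← two_mul, pow_succ,
        mul_comm, mul_assoc, inv_mul_cancel₀ two_ne_zero, mul_one, ih]
  obtain ⟨n, hn⟩ := exists_pow_lt_of_lt_one hs (by norm_num : (2 : ℝ)⁻¹ < 1)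
  rw [← add_sub_cancel ((2 : ℝ)⁻¹ ^ n) s, rpow_add_of_pos a (by positivity) (sub_pos.mpr hn),
    ← mul_assoc, h_half, zero_mul]

lemma commute_rpow_iff {a b : A} (ha : 0 ≤ a) {s : ℝ} (hs : 0 < s) :
    Commute b (a ^ s) ↔ Commute b a := by
  refine ⟨fun h ↦ ?_, fun h ↦ (h.symm.cfc_nnreal _).symm⟩
  have h' : Commute b ((a ^ s) ^ s⁻¹) := (h.symm.cfc_nnreal _).symm
  rwa [rpow_rpow_of_exponent_nonneg a s s⁻¹ hs.le (inv_nonneg.mpr hs.le),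
    mul_inv_cancel₀ hs.ne', rpow_one a] at h'

lemma rpow_mul_mul_rpow_one_sub_eq_iff_commute {a v t : A} (ha : 0 ≤ a) (ht : t = v * a)
    {l : ℝ} (hl : l ∈ Set.Ioo 0 1) :
    a ^ l * v * a ^ (1 - l) = t ↔ Commute t (a ^ l) := by
  obtain ⟨hl0, hl1⟩ := hl
  have hpq : a ^ l * a ^ (1 - l) = a := by
    rw [← rpow_add_of_pos a hl0 (sub_pos.mpr hl1), add_sub_cancel, rpow_one a]
  have hqp : a ^ (1 - l) * a ^ l = a := by
    rw [← rpow_add_of_pos a (sub_pos.mpr hl1) hl0, sub_add_cancel, rpow_one a]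
  constructor
  · intro h
    calc t * a ^ l = a ^ l * v * (a ^ (1 - l) * a ^ l) := by rw [← h, mul_assoc]
      _ = a ^ l * t := by rw [hqp, ht, mul_assoc]
  · intro h
    have hap : Commute a (a ^ l) := ((Commute.refl a).cfc_nnreal _).symm
    have hcomm : (a ^ l * v - v * a ^ l) * a = 0 := by
      rw [sub_mul, mul_assoc, ← ht, mul_assoc, ← hap.eq, ← mul_assoc, ← ht, h.eq, sub_self]
    calc a ^ l * v * a ^ (1 - l) = v * a ^ l * a ^ (1 - l) := by
          rw [← sub_eq_zero, ← sub_mul,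
            mul_rpow_eq_zero_of_mul_eq_zero ha hcomm (sub_pos.mpr hl1)]
      _ = t := by rw [mul_assoc, hpq, ht]

end CStarAlgebra

lemma isQuasinormal_iff_commute_absOp {E : Type*} [NormedAddCommGroup E]
    [InnerProductSpace ℂ E] [CompleteSpace E] (T : E →L[ℂ] E) :
    IsQuasinormal T ↔ Commute T (absOp T) := by
  refine ⟨fun h ↦ (Commute.cfcₙ_nnreal (Commute.symm h) _).symm, fun h ↦ ?_⟩
  have h2 : Commute T (absOp T * absOp T) := h.mul_right h
  rwa [show absOp T * absOp T = adjoint T * T from abs_mul_abs T] at h2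

/-- `T` is quasi-normal iff `Δ_λ(T) = T`, for any fixed `λ ∈ (0,1)`. -/
theorem stmt12 (T V : H →L[ℂ] H) (hV : IsPolarDecomp T V)
    (l : ℝ) (hl : l ∈ Set.Ioo (0 : ℝ) 1) :
    IsQuasinormal T ↔ aluthge l T V = T := by
  rw [isQuasinormal_iff_commute_absOp, ← commute_rpow_iff (sqrt_nonneg _) hl.1]
  exact (rpow_mul_mul_rpow_one_sub_eq_iff_commute (sqrt_nonneg _) hV.2.1 hl).symm
end

section
/- If x, x' are nonzero independent unit vectors in a complex Hilbert space and λ ∈ (0,1), then Δ_λ((x⊗x')*) ≠ (Δ_λ(x⊗x'))* whenever ⟨x,x'⟩ ≠ 0 and x⊗x ≠ x'⊗x'. More precisely, Δ_λ(x⊗x') = ⟨x,x'⟩(x'⊗x') while Δ_λ(x'⊗x) = ⟨x',x⟩(x⊗x). -/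
/-! For unit vectors `x, y` the modulus `|x ⊗ y| = √(⟪x, x⟫ • y ⊗ y)` is the projection `y ⊗ y`,
and every nonzero real power of a projection is the projection itself. Hence
`Δ_λ(x ⊗ y) = |T| V |T| = |T| T = (y ⊗ y)(x ⊗ y) = ⟨y, x⟩ (y ⊗ y)` for `T = x ⊗ y`. Taking
adjoints, `Δ_λ(x ⊗ x')* = ⟨x, x'⟩ (x' ⊗ x')`, which differs from `⟨x, x'⟩ (x ⊗ x)` once
`⟨x, x'⟩ ≠ 0` and `x ⊗ x ≠ x' ⊗ x'`. -/

open ContinuousLinearMap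
open scoped InnerProductSpace

variable {H K : Type*} [NormedAddCommGroup H] [InnerProductSpace ℂ H] [CompleteSpace H]
  [NormedAddCommGroup K] [InnerProductSpace ℂ K] [CompleteSpace K]

section StarProjection

variable {A : Type*} [PartialOrder A] [Ring A] [StarRing A] [TopologicalSpace A]
  [StarOrderedRing A] [Algebra ℝ A] [ContinuousFunctionalCalculus ℝ A IsSelfAdjoint]
  [NonnegSpectrumClass ℝ A] [IsSemitopologicalRing A] [T2Space A]

lemma IsStarProjection.rpow_eq_self {p : A} (hp : IsStarProjection p) {r : ℝ} (hr : r ≠ 0) :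
    p ^ r = p := by
  rw [CFC.rpow_eq_cfc_real hp.nonneg]
  conv_rhs => rw [← cfc_id' ℝ p hp.isSelfAdjoint]
  refine cfc_congr fun t ht => ?_
  rcases hp.isIdempotentElem.spectrum_subset ℝ ht with rfl | rfl
  · exact Real.zero_rpow hr
  · exact Real.one_rpow r

end StarProjection

section RankOne

variable {E : Type*} [NormedAddCommGroup E] [InnerProductSpace ℂ E]

lemma rankOne_apply (x y u : E) : rankOne x y u = ⟪y, u⟫_ℂ • x := rfl

lemma rankOne_mul_rankOne (x y z w : E) :
    rankOne x y * rankOne z w = ⟪y, z⟫_ℂ • rankOne x w := by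
  ext u
  simp only [mul_apply_eq_comp, smul_apply, rankOne_apply, inner_smul_right, smul_smul]
  ring_nf

lemma rankOne_mul_rankOne_of_norm_eq_one (x : E) {y : E} (hy : ‖y‖ = 1) (w : E) :
    rankOne x y * rankOne y w = rankOne x w := by
  rw [rankOne_mul_rankOne, inner_self_eq_norm_sq_to_K, hy]
  simp

variable [CompleteSpace E]

lemma adjoint_rankOne (x y : E) : adjoint (rankOne x y) = rankOne y x := by
  refine ((eq_adjoint_iff _ _).mpr fun u v => ?_).symm
  simp only [rankOne_apply, inner_smul_left, inner_smul_right, inner_conj_symm]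
  ring

lemma isStarProjection_rankOne_self {x : E} (hx : ‖x‖ = 1) : IsStarProjection (rankOne x x) where
  isIdempotentElem := rankOne_mul_rankOne_of_norm_eq_one x hx x
  isSelfAdjoint := adjoint_rankOne x x

lemma absOp_rankOne {x y : E} (hx : ‖x‖ = 1) (hy : ‖y‖ = 1) :
    absOp (rankOne x y) = rankOne y y := by
  rw [absOp, adjoint_rankOne, rankOne_mul_rankOne_of_norm_eq_one y hx y]
  exact CFC.sqrt_unique (isStarProjection_rankOne_self hy).isIdempotentElem
    (isStarProjection_rankOne_self hy).nonneg

end RankOne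

section Aluthge

variable {E : Type*} [NormedAddCommGroup E] [InnerProductSpace ℂ E] [CompleteSpace E]

lemma aluthge_eq_absOp_mul_of_isStarProjection {T V : E →L[ℂ] E} (hT : T = V * absOp T)
    (hP : IsStarProjection (absOp T)) {l : ℝ} (hl₀ : l ≠ 0) (hl₁ : l ≠ 1) :
    aluthge l T V = absOp T * T := by
  rw [aluthge, opPow, opPow, CFC.rpow_eq_pow, CFC.rpow_eq_pow, hP.rpow_eq_self hl₀,
    hP.rpow_eq_self (sub_ne_zero.mpr hl₁.symm), mul_assoc, ← hT]

lemma aluthge_rankOne {x y : E} (hx : ‖x‖ = 1) (hy : ‖y‖ = 1) {V : E →L[ℂ] E}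
    (hV : rankOne x y = V * absOp (rankOne x y)) {l : ℝ} (hl₀ : l ≠ 0) (hl₁ : l ≠ 1) :
    aluthge l (rankOne x y) V = ⟪y, x⟫_ℂ • rankOne y y := by
  have hP := absOp_rankOne hx hy
  rw [aluthge_eq_absOp_mul_of_isStarProjection hV (hP ▸ isStarProjection_rankOne_self hy) hl₀ hl₁,
    hP, rankOne_mul_rankOne]

end Aluthge

theorem stmt15_general (x x' : H) (hx : ‖x‖ = 1) (hx' : ‖x'‖ = 1)
    (hinner : ⟪x', x⟫_ℂ ≠ 0) (hne : rankOne x x ≠ rankOne x' x')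
    (l : ℝ) (hl : l ∈ Set.Ioo (0 : ℝ) 1)
    (V : H →L[ℂ] H) (hV : IsPolarDecomp (rankOne x x') V)
    (W : H →L[ℂ] H) (hW : IsPolarDecomp (rankOne x' x) W) :
    aluthge l (rankOne x x') V = (⟪x', x⟫_ℂ) • rankOne x' x' ∧
    aluthge l (rankOne x' x) W = (⟪x, x'⟫_ℂ) • rankOne x x ∧
    aluthge l (rankOne x' x) W ≠ adjoint (aluthge l (rankOne x x') V) := by
  have hl₀ : l ≠ 0 := hl.1.ne'
  have hl₁ : l ≠ 1 := hl.2.ne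
  have hT := aluthge_rankOne hx hx' hV.2.1 hl₀ hl₁
  have hS := aluthge_rankOne hx' hx hW.2.1 hl₀ hl₁
  refine ⟨hT, hS, fun heq => hne ?_⟩
  have hc : ⟪x, x'⟫_ℂ ≠ 0 := fun h => hinner (inner_eq_zero_symm.mp h)
  rw [hT, hS, ← star_eq_adjoint, star_smul, star_eq_adjoint, adjoint_rankOne,
    RCLike.star_def, inner_conj_symm] at heq
  exact smul_right_injective _ hc heq

/-- for independent unit vectors `x, x'` with `⟨x,x'⟩ ≠ 0` and
`x⊗x ≠ x'⊗x'`, one has `Δ_λ(x⊗x') = ⟨x,x'⟩(x'⊗x')`, `Δ_λ(x'⊗x) = ⟨x',x⟩(x⊗x)`,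
and `Δ_λ((x⊗x')*) ≠ (Δ_λ(x⊗x'))*`. -/
theorem stmt15 (x x' : H) (hx : ‖x‖ = 1) (hx' : ‖x'‖ = 1)
    (hind : LinearIndependent ℂ ![x, x'])
    (hinner : ⟪x', x⟫_ℂ ≠ 0) (hne : rankOne x x ≠ rankOne x' x')
    (l : ℝ) (hl : l ∈ Set.Ioo (0 : ℝ) 1)
    (V : H →L[ℂ] H) (hV : IsPolarDecomp (rankOne x x') V)
    (W : H →L[ℂ] H) (hW : IsPolarDecomp (rankOne x' x) W) :
    aluthge l (rankOne x x') V = (⟪x', x⟫_ℂ) • rankOne x' x' ∧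
    aluthge l (rankOne x' x) W = (⟪x, x'⟫_ℂ) • rankOne x x ∧
    aluthge l (rankOne x' x) W ≠ adjoint (aluthge l (rankOne x x') V) :=
  stmt15_general x x' hx hx' hinner hne l hl V hV W hW
end

section
/- If M, N are orthogonal projections on a Hilbert space with (MN)² = 0, then MN = 0. -/
open ContinuousLinearMap
open scoped InnerProductSpace

variable {H K : Type*} [NormedAddCommGroup H] [InnerProductSpace ℂ H] [CompleteSpace H]
  [NormedAddCommGroup K] [InnerProductSpace ℂ K] [CompleteSpace K]

lemma IsSelfAdjoint.eq_zero_of_mul_self_eq_zero {E : Type*} [NonUnitalNormedRing E] [StarRing E]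
    [CStarRing E] {a : E} (ha : IsSelfAdjoint a) (h : a * a = 0) : a = 0 :=
  (CStarRing.star_mul_self_eq_zero_iff a).mp (by rwa [ha.star_eq])

namespace IsStarProjection

variable {E : Type*} [NonUnitalNormedRing E] [StarRing E] [CStarRing E] {p q : E}

/-- `q p q` is self-adjoint and squares to `q (p q)²`, so it vanishes; then `(p q)⋆ (p q) = q p q`. -/
theorem mul_eq_zero_of_mul_self_eq_zero (hp : IsStarProjection p) (hq : IsStarProjection q)
    (h : (p * q) * (p * q) = 0) : p * q = 0 := by
  have hqpq_sq : (q * p * q) * (q * p * q) = 0 := by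
    calc (q * p * q) * (q * p * q) = q * p * (q * q) * p * q := by simp only [mul_assoc]
      _ = q * ((p * q) * (p * q)) := by rw [hq.isIdempotentElem.eq]; simp only [mul_assoc]
      _ = 0 := by rw [h, mul_zero]
  have hqpq : q * p * q = 0 :=
    (hp.isSelfAdjoint.conjugate_self hq.isSelfAdjoint).eq_zero_of_mul_self_eq_zero hqpq_sq
  refine (CStarRing.star_mul_self_eq_zero_iff (p * q)).mp ?_
  calc star (p * q) * (p * q) = q * (p * p) * q := by
        rw [star_mul, hp.isSelfAdjoint.star_eq, hq.isSelfAdjoint.star_eq]; simp only [mul_assoc]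
    _ = 0 := by rw [hp.isIdempotentElem.eq, hqpq]

end IsStarProjection

/-- if `M, N` are orthogonal projections with `(MN)² = 0`, then `MN = 0`. -/
theorem stmt16 (M N : K →L[ℂ] K) (hM : IsOrthoProj M) (hN : IsOrthoProj N)
    (h : (M * N) * (M * N) = 0) : M * N = 0 :=
  IsStarProjection.mul_eq_zero_of_mul_self_eq_zero ⟨hM.2, hM.1⟩ ⟨hN.2, hN.1⟩ h
end
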